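/- Let g = su(2) × ℝ with bi-invariant inner product ⟨(A,x),(B,y)⟩_bi = Re tr(Aᴴ B) + xy, let U₁ ∈ su(2) with ⟨U₁,U₁⟩_bi = 1, let r > 0 and s ≠ 0, and set X = (r·U₁, s) and V = (a·U₁, b) for real numbers a, b. Let O_X = {(A, s) : A ∈ su(2), Re tr(Aᴴ A) = r²} denote the adjoint orbit of X under SU(2) × S¹. If l > b·s + r·|a|, then there exist symmetric bilinear forms α₀ and α₁ on g with α₁ ≠ 0 and a real ε > 0 such that for every t ∈ (0, ε) the form α₀ + t·α₁ is positive definite and satisfies √((α₀ + t·α₁)(Y,Y)) + ⟨Y,V⟩_bi = l for all Y ∈ O_X; that is, there is a one-dimensional family of inner products α on g for which the Randers norms F = √(α(·,·)) + ⟨·,V⟩_bi take the constant value l on the adjoint orbit of X. -/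

import Mathlib

open Matrix

attribute [local instance] LieRing.ofAssociativeRing

/-- The real Lie algebra `su(n)` of traceless skew-Hermitian `n × n` complex matrices,
as a Lie subalgebra of the Lie algebra of all `n × n` complex matrices (with commutator
bracket). -/
def su (n : ℕ) : LieSubalgebra ℝ (Matrix (Fin n) (Fin n) ℂ) where
  carrier := {A | Aᴴ = -A ∧ A.trace = 0}
  add_mem' := by
    rintro A B ⟨hA1, hA2⟩ ⟨hB1, hB2⟩
    constructor
    · simp [conjTranspose_add, hA1, hB1]; abel
    · simp [trace_add, hA2, hB2]
  zero_mem' := by simp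
  smul_mem' := by
    rintro c A ⟨hA1, hA2⟩
    constructor
    · simp [conjTranspose_smul, hA1]
    · simp [trace_smul, hA2]
  lie_mem' := by
    rintro A B ⟨hA1, hA2⟩ ⟨hB1, hB2⟩
    constructor
    · simp only [Ring.lie_def, conjTranspose_sub, conjTranspose_mul, hA1, hB1]
      simp only [mul_neg, neg_mul, neg_sub, neg_neg]
    · simp [Ring.lie_def, trace_sub, trace_mul_comm A B]

/-- The bi-invariant inner product `⟨A, B⟩_bi = Re tr(Aᴴ B)`. -/
noncomputable def binner {n : ℕ} (A B : Matrix (Fin n) (Fin n) ℂ) : ℝ :=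
  ((Aᴴ * B).trace).re

theorem conj_mem_su {n : ℕ} (u : specialUnitaryGroup (Fin n) ℂ) {A : Matrix (Fin n) (Fin n) ℂ}
    (hA : A ∈ su n) : (u : Matrix (Fin n) (Fin n) ℂ) * A * (u : Matrix (Fin n) (Fin n) ℂ)ᴴ ∈ su n := by
  obtain ⟨hA1, hA2⟩ := hA
  have hu : (u : Matrix (Fin n) (Fin n) ℂ)ᴴ * (u : Matrix (Fin n) (Fin n) ℂ) = 1 := by
    have hmem : (u : Matrix (Fin n) (Fin n) ℂ) ∈ unitaryGroup (Fin n) ℂ :=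
      (Submonoid.mem_inf.mp u.2).1
    rw [Matrix.mem_unitaryGroup_iff'] at hmem
    simpa [Matrix.star_eq_conjTranspose] using hmem
  constructor
  · simp only [conjTranspose_mul, conjTranspose_conjTranspose, hA1]
    simp [Matrix.mul_assoc]
  · calc ((u : Matrix (Fin n) (Fin n) ℂ) * A * (u : Matrix (Fin n) (Fin n) ℂ)ᴴ).trace
        = ((u : Matrix (Fin n) (Fin n) ℂ)ᴴ * ((u : Matrix (Fin n) (Fin n) ℂ) * A)).trace := by
          rw [trace_mul_comm]
      _ = A.trace := by rw [← Matrix.mul_assoc, hu, Matrix.one_mul]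
      _ = 0 := hA2

/-- The adjoint action of `SU(n)` on `su(n)`: `Ad u X = u X u⁻¹ = u X uᴴ`. -/
noncomputable def Ad {n : ℕ} (u : specialUnitaryGroup (Fin n) ℂ) (X : su n) : su n :=
  ⟨(u : Matrix (Fin n) (Fin n) ℂ) * (X : Matrix (Fin n) (Fin n) ℂ) *
    (u : Matrix (Fin n) (Fin n) ℂ)ᴴ, conj_mem_su u X.2⟩


/-!
Put `c = l - b s`, so `c > r |a|`. Take `α₀ = L ⊗ L` for the functional
`L (x, v) = a ⟨x, U₁⟩ - (c / s) v` and `α₁ (x, v) = ⟨x, x⟩ - (r / s)² v²`, which vanishes on the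
orbit. There `√α(Y, Y) = |L Y| = c - a ⟨Y₁, U₁⟩`, because `|a ⟨Y₁, U₁⟩| ≤ r |a| < c` by
Cauchy–Schwarz, so the Randers norm equals `c + b s = l`. By Cauchy–Schwarz again,
positive definiteness of `α₀ + t α₁` reduces to that of a quadratic form in `(⟨x, U₁⟩, v)`,
whose determinant is positive exactly when `r² (a² + t) < c²`.
-/

open scoped ComplexOrder

lemma binner_comm {n : ℕ} (A B : Matrix (Fin n) (Fin n) ℂ) : binner A B = binner B A := by
  rw [binner, binner, show Bᴴ * A = (Aᴴ * B)ᴴ by simp, trace_conjTranspose]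
  simp

lemma binner_self_pos {n : ℕ} {A : Matrix (Fin n) (Fin n) ℂ} (hA : A ≠ 0) : 0 < binner A A :=
  (Complex.pos_iff.mp <| (posSemidef_conjTranspose_mul_self A).trace_nonneg.lt_of_ne'
    (trace_conjTranspose_mul_self_eq_zero_iff.not.mpr hA)).1

noncomputable def binnerForm (n : ℕ) : LinearMap.BilinForm ℝ (su n) :=
  LinearMap.mk₂ ℝ (fun A B => binner (A : Matrix (Fin n) (Fin n) ℂ) B)
    (fun A A' B => by simp [binner, conjTranspose_add, add_mul, trace_add])
    (fun c A B => by simp [binner, conjTranspose_smul, trace_smul])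
    (fun A B B' => by simp [binner, mul_add, trace_add])
    (fun c A B => by simp [binner, trace_smul])

lemma binnerForm_self_pos {n : ℕ} {A : su n} (hA : A ≠ 0) : 0 < binnerForm n A A :=
  binner_self_pos (by rwa [Ne, ZeroMemClass.coe_eq_zero])

lemma sq_sub_add_mul_sub_pos {a k p t f q v : ℝ} (ht : 0 < t) (hk : p * (a ^ 2 + t) < k ^ 2)
    (hfq : f ^ 2 ≤ q) (hqv : 0 < q ∨ v ≠ 0) :
    0 < (a * f - k * v) ^ 2 + t * (q - p * v ^ 2) := by
  rcases eq_or_ne v 0 with rfl | hv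
  · have hq : 0 < q := hqv.resolve_right (not_not.mpr rfl)
    nlinarith [sq_nonneg (a * f), mul_pos ht hq]
  · -- completing the square in `f`
    have key : (a ^ 2 + t) * ((a * f - k * v) ^ 2 + t * (f ^ 2 - p * v ^ 2)) =
        ((a ^ 2 + t) * f - a * k * v) ^ 2 + t * (k ^ 2 - p * (a ^ 2 + t)) * v ^ 2 := by ring
    have hpos : 0 < (a * f - k * v) ^ 2 + t * (f ^ 2 - p * v ^ 2) := by
      refine pos_of_mul_pos_right (key ▸ ?_) (by positivity : (0:ℝ) ≤ a ^ 2 + t)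
      have : 0 < t * (k ^ 2 - p * (a ^ 2 + t)) * v ^ 2 := by
        have := sub_pos.mpr hk; positivity
      positivity
    nlinarith

lemma mul_lt_of_sq_le_sq {a f r c : ℝ} (hf : f ^ 2 ≤ r ^ 2) (hr : 0 ≤ r) (hc : r * |a| < c) :
    a * f < c :=
  calc a * f ≤ |a| * |f| := (le_abs_self _).trans_eq (abs_mul a f)
    _ ≤ |a| * r := mul_le_mul_of_nonneg_left (abs_le_of_sq_le_sq hf hr) (abs_nonneg a)
    _ < c := by rwa [mul_comm]

section RandersFamily

open LinearMap

variable {E : Type*} [AddCommGroup E] [Module ℝ E] (β : LinearMap.BilinForm ℝ E)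

noncomputable def tiltedFunctional (u : E) (a k : ℝ) : E × ℝ →ₗ[ℝ] ℝ :=
  a • (β.flip u ∘ₗ fst ℝ E ℝ) - k • snd ℝ E ℝ

noncomputable def coneForm (p : ℝ) : LinearMap.BilinForm ℝ (E × ℝ) :=
  β.compl₁₂ (fst ℝ E ℝ) (fst ℝ E ℝ) - p • (mul ℝ ℝ).compl₁₂ (snd ℝ E ℝ) (snd ℝ E ℝ)

lemma coneForm_apply (p : ℝ) (x y : E × ℝ) : coneForm β p x y = β x.1 y.1 - p * (x.2 * y.2) :=
  rfl

lemma square_add_smul_coneForm_apply_self (u : E) (a k p t : ℝ) (x : E × ℝ) :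
    ((mul ℝ ℝ).compl₁₂ (tiltedFunctional β u a k) (tiltedFunctional β u a k) +
        t • coneForm β p) x x =
      (a * β x.1 u - k * x.2) ^ 2 + t * (β x.1 x.1 - p * x.2 ^ 2) := by
  simp [tiltedFunctional, coneForm_apply]
  ring

variable {β}

lemma apply_sq_le_of_self_pos (hβ : ∀ x y, β x y = β y x) (hpos : ∀ x, x ≠ 0 → 0 < β x x)
    {u : E} (hu : β u u = 1) (x : E) : β x u ^ 2 ≤ β x x := by
  have hnonneg : ∀ x, 0 ≤ β x x := fun x => by
    rcases eq_or_ne x 0 with rfl | hx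
    · simp
    · exact (hpos x hx).le
  simpa [sq, hβ u x, hu] using BilinForm.apply_mul_apply_le_of_forall_zero_le β hnonneg x u

lemma square_add_smul_coneForm_pos (hβ : ∀ x y, β x y = β y x)
    (hpos : ∀ x, x ≠ 0 → 0 < β x x) {u : E} (hu : β u u = 1) {a k p t : ℝ} (ht : 0 < t)
    (hk : p * (a ^ 2 + t) < k ^ 2) {x : E × ℝ} (hx : x ≠ 0) :
    0 < ((mul ℝ ℝ).compl₁₂ (tiltedFunctional β u a k) (tiltedFunctional β u a k) +
        t • coneForm β p) x x := by
  rw [square_add_smul_coneForm_apply_self]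
  refine sq_sub_add_mul_sub_pos ht hk (apply_sq_le_of_self_pos hβ hpos hu x.1) ?_
  by_contra! h
  exact hx (Prod.ext (by_contra fun h1 => (hpos _ h1).not_ge h.1) h.2)

theorem exists_randers_family (hβ : ∀ x y, β x y = β y x)
    (hpos : ∀ x, x ≠ 0 → 0 < β x x) (u : E) (hu : β u u = 1)
    (r s a b l : ℝ) (hr : 0 < r) (hs : s ≠ 0) (hl : b * s + r * |a| < l) :
    ∃ (α₀ α₁ : LinearMap.BilinForm ℝ (E × ℝ)) (ε : ℝ),
      (∀ x y, α₀ x y = α₀ y x) ∧ (∀ x y, α₁ x y = α₁ y x) ∧ α₁ ≠ 0 ∧ 0 < ε ∧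
      ∀ t : ℝ, 0 < t → t < ε →
        (∀ x : E × ℝ, x ≠ 0 → 0 < (α₀ + t • α₁) x x) ∧
        (∀ Y : E × ℝ, (β Y.1 Y.1 = r ^ 2 ∧ Y.2 = s) →
          Real.sqrt ((α₀ + t • α₁) Y Y) + (β Y.1 (a • u) + Y.2 * b) = l) := by
  set c := l - b * s
  have hc : r * |a| < c := by linarith
  have hac : a ^ 2 * r ^ 2 < c ^ 2 := by
    nlinarith [mul_self_lt_mul_self (by positivity) hc, sq_abs a]
  set L := tiltedFunctional β u a (c / s)
  refine ⟨(mul ℝ ℝ).compl₁₂ L L, coneForm β ((r / s) ^ 2), (c ^ 2 - a ^ 2 * r ^ 2) / r ^ 2,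
    fun x y => by simp [mul_comm], fun x y => by simp [coneForm_apply, hβ x.1, mul_comm],
    fun h => ?_, div_pos (by linarith) (by positivity), fun t ht htε => ⟨fun x hx => ?_, ?_⟩⟩
  · have := LinearMap.congr_fun₂ h (0, 1) (0, 1)
    simp [coneForm_apply] at this
    exact this.elim hr.ne' hs
  · refine square_add_smul_coneForm_pos hβ hpos hu ht ?_ hx
    rw [div_pow, div_pow, div_mul_eq_mul_div]
    gcongr
    rw [lt_div_iff₀ (by positivity)] at htε
    linarith
  · rintro Y ⟨hY1, hY2⟩
    have hrs : (r / s) ^ 2 * s ^ 2 = r ^ 2 := by field_simp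
    have haf : a * β Y.1 u < c :=
      mul_lt_of_sq_le_sq (hY1 ▸ apply_sq_le_of_self_pos hβ hpos hu Y.1) hr.le hc
    rw [square_add_smul_coneForm_apply_self, hY1, hY2, hrs, sub_self, mul_zero, add_zero,
      div_mul_cancel₀ c hs, Real.sqrt_sq_eq_abs, abs_of_neg (sub_neg.mpr haf), map_smul,
      smul_eq_mul]
    ring

end RandersFamily

/-- on `g = su(2) × ℝ` with `X = (r·U₁, s)` (with `U₁` a unit vector, `r > 0`,
`s ≠ 0`) and `V = (a·U₁, b)`, if `l > b·s + r·|a|` then there is a one-dimensional family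
`α₀ + t·α₁` (for small `t > 0`) of inner products on `g` whose Randers norms
`√(α(·,·)) + ⟨·,V⟩_bi` take the constant value `l` on the adjoint orbit
`O_X = {(A, s) : A ∈ su(2), ⟨A,A⟩_bi = r²}` of `X`. -/
theorem stmt_10 (U₁ : su 2)
    (hU₁ : binner (U₁ : Matrix (Fin 2) (Fin 2) ℂ) (U₁ : Matrix (Fin 2) (Fin 2) ℂ) = 1)
    (r s a b l : ℝ) (hr : 0 < r) (hs : s ≠ 0)
    (hl : b * s + r * |a| < l) :
    ∃ (α₀ α₁ : (su 2 × ℝ) →ₗ[ℝ] (su 2 × ℝ) →ₗ[ℝ] ℝ) (ε : ℝ),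
      (∀ x y : su 2 × ℝ, α₀ x y = α₀ y x) ∧
      (∀ x y : su 2 × ℝ, α₁ x y = α₁ y x) ∧
      α₁ ≠ 0 ∧ 0 < ε ∧
      ∀ t : ℝ, 0 < t → t < ε →
        (∀ x : su 2 × ℝ, x ≠ 0 → 0 < (α₀ + t • α₁) x x) ∧
        (∀ Y : su 2 × ℝ,
          (binner (Y.1 : Matrix (Fin 2) (Fin 2) ℂ) (Y.1 : Matrix (Fin 2) (Fin 2) ℂ) = r ^ 2 ∧
            Y.2 = s) →
          Real.sqrt ((α₀ + t • α₁) Y Y) +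
            (binner (Y.1 : Matrix (Fin 2) (Fin 2) ℂ) (a • (U₁ : Matrix (Fin 2) (Fin 2) ℂ)) +
              Y.2 * b) = l) :=
  exists_randers_family (β := binnerForm 2) (fun _ _ => binner_comm _ _)
    (fun _ => binnerForm_self_pos) U₁ hU₁ r s a b l hr hs hl
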